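/- arXiv:1301.3659 — 2 statements merged into one kernel-verified Lean document; each statement's English description precedes it below -/
import Mathlib

section
/- For every real number s > 1, ζ(s) = lim_{q→∞} (π/(2q))^s · Σ_{p=1}^{q-1} cot^s(pπ/(2q)). -/
/-!
With `h = π / (2q)` the `q`-th term is `∑_{k < q-1} (h cot ((k+1) h))^s`. Since `x cot x → 1` as
`x → 0`, each summand tends to `(k+1)^(-s)`, and since `tan x > x` on `(0, π/2)` it is bounded by
`(k+1)^(-s)`, which is summable for `s > 1`. Tannery's theorem gives the limit.
-/

open Real Filter Finset Topology

theorem tendsto_sum_range_of_dominated_convergence {α G : Type*} {𝓕 : Filter α}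
    [NormedAddCommGroup G] [CompleteSpace G] {f : α → ℕ → G} {g : ℕ → G} {bound : ℕ → ℝ}
    {N : α → ℕ} (hN : Tendsto N 𝓕 atTop) (h_sum : Summable bound)
    (hfg : ∀ k, Tendsto (f · k) 𝓕 (𝓝 (g k))) (h_bound : ∀ a, ∀ k < N a, ‖f a k‖ ≤ bound k) :
    Tendsto (fun a => ∑ k ∈ range (N a), f a k) 𝓕 (𝓝 (∑' k, g k)) := by
  have h_tsum := tendsto_tsum_of_dominated_convergence
    (f := fun a k => if k < N a then f a k else 0) h_sum.abs
    (fun k => (hfg k).congr' ?_) (.of_forall fun a k => ?_)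
  · refine h_tsum.congr fun a => ?_
    rw [tsum_eq_sum (s := range (N a)) fun k hk => if_neg (by simpa using hk)]
    exact sum_congr rfl fun k hk => if_pos (mem_range.1 hk)
  · filter_upwards [hN.eventually_gt_atTop k] with a hk
    exact (if_pos hk).symm
  · split_ifs with hk
    · exact (h_bound a k hk).trans (le_abs_self _)
    · simp

namespace Real

lemma cot_pos_of_mem_Ioo {x : ℝ} (hx₀ : 0 < x) (hx : x < π / 2) : 0 < cot x := by
  rw [← inv_inv (cot x), cot_inv_eq_tan]
  exact inv_pos.2 (tan_pos_of_pos_of_lt_pi_div_two hx₀ hx)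

lemma cot_le_inv {x : ℝ} (hx₀ : 0 < x) (hx : x < π / 2) : cot x ≤ x⁻¹ := by
  rw [← inv_inv (cot x), cot_inv_eq_tan]
  exact inv_anti₀ hx₀ (lt_tan hx₀ hx).le

lemma mul_cot_eq_cos_div_sinc {x : ℝ} (hx : x ≠ 0) : x * cot x = cos x / sinc x := by
  rw [sinc_of_ne_zero hx, cot_eq_cos_div_sin]
  field_simp

lemma tendsto_mul_cot_nhdsNE_zero : Tendsto (fun x => x * cot x) (𝓝[≠] 0) (𝓝 1) := by
  have h : ContinuousAt (fun x => cos x / sinc x) 0 :=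
    continuous_cos.continuousAt.div continuous_sinc.continuousAt (by simp)
  rw [show (1 : ℝ) = cos 0 / sinc 0 by simp]
  exact (h.tendsto.mono_left nhdsWithin_le_nhds).congr'
    (eventually_nhdsWithin_of_forall fun x hx => (mul_cot_eq_cos_div_sinc hx).symm)

lemma mul_cot_mul_le_inv {c h : ℝ} (hc : 0 < c) (hh : 0 < h) (hch : c * h < π / 2) :
    h * cot (c * h) ≤ c⁻¹ :=
  calc h * cot (c * h) ≤ h * (c * h)⁻¹ :=
        mul_le_mul_of_nonneg_left (cot_le_inv (by positivity) hch) hh.le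
    _ = c⁻¹ := by field_simp

lemma tendsto_mul_cot_mul {c : ℝ} (hc : c ≠ 0) :
    Tendsto (fun h => h * cot (c * h)) (𝓝[≠] 0) (𝓝 c⁻¹) := by
  have h_scale : Tendsto (c * ·) (𝓝[≠] 0) (𝓝[≠] 0) :=
    tendsto_nhdsWithin_iff.2 ⟨((continuous_const_mul c).tendsto' 0 0 (mul_zero c)).mono_left
      nhdsWithin_le_nhds,
      eventually_nhdsWithin_of_forall fun h hh => mul_ne_zero hc hh⟩
  simpa using ((tendsto_mul_cot_nhdsNE_zero.comp h_scale).const_mul c⁻¹).congr fun h => by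
    simp only [Function.comp_apply]; field_simp

end Real

lemma natCast_mul_pi_div_mem_Ioo {p q : ℕ} (hp : 0 < p) (hpq : p < q) :
    (p : ℝ) * π / (2 * q) ∈ Set.Ioo 0 (π / 2) := by
  have hq : (0 : ℝ) < q := by exact_mod_cast hp.trans hpq
  have hpq' : (p : ℝ) < q := by exact_mod_cast hpq
  refine ⟨by positivity, ?_⟩
  rw [div_lt_div_iff₀ (by positivity) two_pos]
  nlinarith [pi_pos]

lemma rpow_mul_sum_Icc_cot_rpow (s : ℝ) (q : ℕ) :
    (π / (2 * q)) ^ s * ∑ p ∈ Icc 1 (q - 1), cot (p * π / (2 * q)) ^ s =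
      ∑ k ∈ range (q - 1), (π / (2 * q) * cot ((k + 1 : ℕ) * π / (2 * q))) ^ s := by
  rw [range_eq_Ico, sum_Ico_add' (fun p : ℕ => (π / (2 * q) * cot (p * π / (2 * q))) ^ s),
    zero_add, Ico_add_one_right_eq_Icc, mul_sum]
  refine sum_congr rfl fun p hp => ?_
  obtain ⟨hp₁, hpq⟩ := mem_Icc.1 hp
  obtain ⟨hx₀, hx⟩ := natCast_mul_pi_div_mem_Ioo hp₁ (by omega : p < q)
  exact (mul_rpow (by positivity) (cot_pos_of_mem_Ioo hx₀ hx).le).symm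

lemma norm_rpow_mul_cot_le {s : ℝ} (hs : 0 ≤ s) {k q : ℕ} (hkq : k + 1 < q) :
    ‖(π / (2 * q) * cot ((k + 1 : ℕ) * π / (2 * q))) ^ s‖ ≤ 1 / ((k : ℝ) + 1) ^ s := by
  obtain ⟨hx₀, hx⟩ := natCast_mul_pi_div_mem_Ioo k.succ_pos hkq
  have hq : (0 : ℝ) < q := by exact_mod_cast k.succ_pos.trans hkq
  rw [mul_div_assoc] at hx₀ hx ⊢
  have h_nonneg : 0 ≤ π / (2 * q) * cot ((k + 1 : ℕ) * (π / (2 * q))) :=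
    mul_nonneg (by positivity) (cot_pos_of_mem_Ioo hx₀ hx).le
  rw [norm_of_nonneg (rpow_nonneg h_nonneg s), one_div, ← inv_rpow (by positivity)]
  exact_mod_cast rpow_le_rpow h_nonneg
    (mul_cot_mul_le_inv (by positivity) (by positivity) hx) hs

lemma tendsto_rpow_mul_cot (s : ℝ) (k : ℕ) :
    Tendsto (fun q : ℕ => (π / (2 * q) * cot ((k + 1 : ℕ) * π / (2 * q))) ^ s) atTop
      (𝓝 (1 / ((k : ℝ) + 1) ^ s)) := by
  have h_width : Tendsto (fun q : ℕ => π / (2 * q)) atTop (𝓝[≠] 0) := by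
    refine tendsto_nhdsWithin_iff.2 ⟨?_, ?_⟩
    · simpa only [div_div] using tendsto_const_div_atTop_nhds_zero_nat (π / 2)
    · filter_upwards [eventually_gt_atTop 0] with q hq
      have : (0 : ℝ) < q := by exact_mod_cast hq
      exact (by positivity : (0 : ℝ) < π / (2 * q)).ne'
  have h_lim := ((tendsto_mul_cot_mul (Nat.cast_add_one_ne_zero k)).comp h_width).rpow_const (p := s)
    (Or.inl (by positivity))
  rw [one_div, ← inv_rpow (by positivity)]
  simp_rw [mul_div_assoc]
  exact_mod_cast h_lim

theorem zeta_cot_limit_even (s : ℝ) (hs : 1 < s) :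
    Tendsto (fun q : ℕ =>
        (π / (2 * q)) ^ s * ∑ p ∈ Finset.Icc 1 (q - 1), (Real.cot (p * π / (2 * q))) ^ s)
      atTop (nhds (∑' n : ℕ, 1 / ((n : ℝ) + 1) ^ s)) := by
  simp_rw [rpow_mul_sum_Icc_cot_rpow]
  refine tendsto_sum_range_of_dominated_convergence (tendsto_sub_atTop_nat 1) ?_
    (tendsto_rpow_mul_cot s) fun q k hk => norm_rpow_mul_cot_le (by linarith) (by omega)
  exact_mod_cast (summable_nat_add_iff 1).2 (summable_one_div_nat_rpow.2 hs)
end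

section
/- Let m, n be fixed nonnegative integers and s > 1 a real number. Then lim_{q→∞} (π/(2q+m))^s · Σ_{p=1}^{⌊(2q+n−1)/2⌋} csc^s(pπ/(2q+n)) = ζ(s), where the limit is over positive integers q (with q ≥ 2 if n = 0). -/
open Real Filter Finset
open scoped Topology

/-!
Extend the sum to a series over `k` whose `k`-th term is `(π/(2q+m) · csc((k+1)π/(2q+n)))^s` while
`k + 1` is in range and `0` afterwards. Since `sin x = x · sinc x` with `sinc` continuous and
`sinc 0 = 1`, each term tends to `(k+1)^(-s)` as `q → ∞`. Jordan's inequality `sin x ≥ 2x/π` on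
`[0, π/2]` bounds the terms uniformly in `q ≥ 1` by `((n+1)π / (2(k+1)))^s`, which is summable for
`s > 1`, so Tannery's theorem lets the limit pass through the series.
-/

namespace Real

lemma sin_eq_mul_sinc (x : ℝ) : sin x = x * sinc x := by
  rcases eq_or_ne x 0 with rfl | hx
  · simp
  · rw [sinc_of_ne_zero hx, mul_div_cancel₀ _ hx]

lemma inv_sin_le_pi_div_two_div {x : ℝ} (hx0 : 0 < x) (hx : x ≤ π / 2) :
    (sin x)⁻¹ ≤ π / 2 / x := by
  have hjordan : 2 / π * x ≤ sin x := mul_le_sin hx0.le hx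
  calc (sin x)⁻¹ ≤ (2 / π * x)⁻¹ := inv_anti₀ (by positivity) hjordan
    _ = π / 2 / x := by field_simp

end Real

lemma sum_Icc_one_eq_tsum {M : Type*} [AddCommMonoid M] [TopologicalSpace M] (N : ℕ)
    (f : ℕ → M) :
    ∑ p ∈ Icc 1 N, f p = ∑' k, if k + 1 ≤ N then f (k + 1) else 0 := by
  rw [tsum_eq_sum (s := range N) fun k hk => if_neg (by simpa using hk),
    sum_ite_of_true fun k hk => by simpa using hk, ← Ico_add_one_right_eq_Icc,
    sum_Ico_eq_sum_range, add_tsub_cancel_right]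
  exact sum_congr rfl fun k _ => by rw [add_comm]

lemma mul_pi_div_mem_Ioc {p N : ℝ} (hp : 0 < p) (hpN : 2 * p ≤ N) :
    p * π / N ∈ Set.Ioc 0 (π / 2) := by
  have hN : 0 < N := by linarith
  refine ⟨by positivity, ?_⟩
  rw [div_le_div_iff₀ hN two_pos]
  nlinarith [pi_pos]

lemma sin_mul_pi_div_pos {p N : ℝ} (hp : 0 < p) (hpN : 2 * p ≤ N) : 0 < sin (p * π / N) :=
  have hx := mul_pi_div_mem_Ioc hp hpN
  sin_pos_of_pos_of_lt_pi hx.1 (hx.2.trans_lt (half_lt_self pi_pos))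

lemma pi_div_mul_inv_sin_le {C M N p : ℝ} (hM : 0 < M) (hNM : N ≤ C * M) (hp : 0 < p)
    (hpN : 2 * p ≤ N) : π / M * (sin (p * π / N))⁻¹ ≤ C * π / 2 / p := by
  have hx := mul_pi_div_mem_Ioc hp hpN
  have hN : 0 < N := by linarith
  calc π / M * (sin (p * π / N))⁻¹ ≤ π / M * (π / 2 / (p * π / N)) :=
        mul_le_mul_of_nonneg_left (inv_sin_le_pi_div_two_div hx.1 hx.2) (by positivity)
    _ = π / 2 / p * (N / M) := by field_simp
    _ ≤ π / 2 / p * C := by gcongr; rwa [div_le_iff₀ hM]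
    _ = C * π / 2 / p := by ring

lemma summable_div_nat_succ_rpow {C s : ℝ} (hC : 0 ≤ C) (hs : 1 < s) :
    Summable fun k : ℕ => (C / ((k + 1 : ℕ) : ℝ)) ^ s := by
  have h := ((summable_nat_add_iff 1).2 (summable_one_div_nat_rpow.2 hs)).mul_left (C ^ s)
  refine h.congr fun k => ?_
  rw [div_rpow hC (by positivity), mul_one_div]

lemma pi_div_mul_inv_sin_eq (M N c : ℝ) :
    π / M * (sin (c * π / N))⁻¹ = N / M / (c * sinc (c * π / N)) := by
  rw [sin_eq_mul_sinc]
  simp only [div_eq_mul_inv, mul_inv, inv_inv]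
  linear_combination (N * M⁻¹ * c⁻¹ * (sinc (c * π * N⁻¹))⁻¹) * mul_inv_cancel₀ pi_ne_zero

lemma tendsto_pi_div_mul_inv_sin_atTop (a b : ℝ) {c : ℝ} (hc : c ≠ 0) :
    Tendsto (fun t : ℝ => π / (2 * t + a) * (sin (c * π / (2 * t + b)))⁻¹) atTop (𝓝 c⁻¹) := by
  have hlin (d : ℝ) : Tendsto (fun t : ℝ => 2 * t + d) atTop atTop :=
    tendsto_atTop_add_const_right _ d (tendsto_id.const_mul_atTop two_pos)
  have hratio : Tendsto (fun t : ℝ => (2 * t + b) / (2 * t + a)) atTop (𝓝 1) := by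
    have := tendsto_const_nhds (x := (1 : ℝ)).add
      ((tendsto_const_nhds (x := b - a)).div_atTop (hlin a))
    rw [add_zero] at this
    refine this.congr' ?_
    filter_upwards [(hlin a).eventually_gt_atTop 0] with t ht
    field_simp
    ring
  have hsinc : Tendsto (fun t : ℝ => sinc (c * π / (2 * t + b))) atTop (𝓝 1) := by
    simpa [Function.comp_def] using
      (continuous_sinc.tendsto 0).comp (tendsto_const_nhds.div_atTop (hlin b))
  have hlim := hratio.div (hsinc.const_mul c) (by simpa using hc)
  rw [mul_one, one_div] at hlim
  exact hlim.congr fun t => (pi_div_mul_inv_sin_eq _ _ _).symm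

noncomputable def cscTerm (m n q p : ℕ) : ℝ := π / (2 * q + m) * (sin (p * π / (2 * q + n)))⁻¹

lemma cscTerm_nonneg (m : ℕ) {n q p : ℕ} (hp : 0 < p) (hpq : 2 * p ≤ 2 * q + n) :
    0 ≤ cscTerm m n q p :=
  mul_nonneg (by positivity)
    (inv_nonneg.2 (sin_mul_pi_div_pos (by positivity) (by exact_mod_cast hpq)).le)

lemma cscTerm_rpow (m : ℕ) {n q p : ℕ} (hp : 0 < p) (hpq : 2 * p ≤ 2 * q + n) (s : ℝ) :
    cscTerm m n q p ^ s = (π / (2 * q + m)) ^ s * (sin (p * π / (2 * q + n)))⁻¹ ^ s :=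
  mul_rpow (by positivity)
    (inv_nonneg.2 (sin_mul_pi_div_pos (by positivity) (by exact_mod_cast hpq)).le)

lemma cscTerm_le {m n q p : ℕ} (hq : 1 ≤ q) (hp : 0 < p) (hpq : 2 * p ≤ 2 * q + n) :
    cscTerm m n q p ≤ (n + 1) * π / 2 / p := by
  have hq' : (1 : ℝ) ≤ q := by exact_mod_cast hq
  refine pi_div_mul_inv_sin_le (by positivity) ?_ (by positivity) (by exact_mod_cast hpq)
  nlinarith

lemma tendsto_cscTerm (m n : ℕ) {p : ℕ} (hp : 0 < p) :
    Tendsto (fun q => cscTerm m n q p) atTop (𝓝 (p : ℝ)⁻¹) :=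
  (tendsto_pi_div_mul_inv_sin_atTop m n (by positivity)).comp tendsto_natCast_atTop_atTop

theorem zeta_csc_limit_general (m n : ℕ) (s : ℝ) (hs : 1 < s) :
    Tendsto (fun q : ℕ =>
        (π / (2 * q + m)) ^ s *
          ∑ p ∈ Finset.Icc 1 ((2 * q + n - 1) / 2), ((Real.sin (p * π / (2 * q + n)))⁻¹) ^ s)
      atTop (nhds (∑' k : ℕ, 1 / ((k : ℝ) + 1) ^ s)) := by
  have hsum (q : ℕ) :
      (π / (2 * q + m)) ^ s * ∑ p ∈ Icc 1 ((2 * q + n - 1) / 2), ((sin (p * π / (2 * q + n)))⁻¹) ^ s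
        = ∑' k, if k + 1 ≤ (2 * q + n - 1) / 2 then cscTerm m n q (k + 1) ^ s else 0 := by
    rw [mul_sum, sum_Icc_one_eq_tsum]
    refine tsum_congr fun k => ?_
    split_ifs with hk
    · exact (cscTerm_rpow m k.succ_pos (by omega) s).symm
    · rfl
  refine (tendsto_tsum_of_dominated_convergence
    (bound := fun k : ℕ => ((n + 1) * π / 2 / ((k + 1 : ℕ) : ℝ)) ^ s)
    (summable_div_nat_succ_rpow (by positivity) hs) (fun k => ?_) ?_).congr fun q => (hsum q).symm
  · have hlim := (tendsto_cscTerm m n k.succ_pos).rpow_const (Or.inr (by positivity : 0 ≤ s))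
    rw [inv_rpow (by positivity), ← one_div, Nat.cast_succ] at hlim
    refine hlim.congr' ?_
    filter_upwards [eventually_ge_atTop (k + 2)] with q hq
    rw [if_pos (by omega)]
  · filter_upwards [eventually_ge_atTop 1] with q hq k
    split_ifs with hk
    · have hkq : 2 * (k + 1) ≤ 2 * q + n := by omega
      rw [norm_of_nonneg (rpow_nonneg (cscTerm_nonneg m k.succ_pos hkq) s)]
      exact rpow_le_rpow (cscTerm_nonneg m k.succ_pos hkq) (cscTerm_le hq k.succ_pos hkq)
        (by positivity)
    · rw [norm_zero]
      positivity
end
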